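/- Let u : [0,∞) → V be a solution of the Navier–Stokes–Voigt equation satisfying sup_{t≥0} ‖u(t)‖_{V_α} ≤ M₁ (e.g., a solution on the global attractor). Set G = (I + α²A)^{1/2}, û = Gu, and for w ∈ H define L(û;t)w = −(ν/α²)w + (ν/α²)G^{-2}w − G^{-1}B(G^{-1}w, u(t)) − G^{-1}B(u(t), G^{-1}w). Then there exists a constant c > 0, independent of α, such that for every w ∈ H and t ≥ 0, ⟨L(û;t)w, w⟩ ≤ −h₀|w|² + h₁(t)|G^{-1}w|², where h₀ = ν/(2α²) and h₁(t) = (1/α²)(ν + c(M₁²/ν³)‖u(t)‖²). -/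

import Mathlib

open scoped RealInnerProductSpace
open Filter

noncomputable section

/-- Hausdorff semidistance between two sets with respect to a distance function `d`. -/
def hausSemidist {X : Type*} (d : X → X → ℝ) (B C : Set X) : ℝ :=
  ⨆ b ∈ B, ⨅ c ∈ C, d b c

/-- Smallest number of closed `ε`-balls (w.r.t. the distance `d`) needed to cover `K`. -/
def covN {X : Type*} (d : X → X → ℝ) (K : Set X) (ε : ℝ) : ℕ :=
  sInf {n : ℕ | ∃ F : Finset X, F.card = n ∧ K ⊆ ⋃ x ∈ F, {y | d x y ≤ ε}}

/-- Fractal (box-counting) dimension of `K` with respect to the distance `d`: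
`dim K = limsup_{ε → 0⁺} log N(ε,K) / log (1/ε)`. -/
def fdim {X : Type*} (d : X → X → ℝ) (K : Set X) : ℝ :=
  Filter.limsup (fun ε : ℝ => Real.log (covN d K ε) / Real.log (1 / ε))
    (nhdsWithin 0 (Set.Ioi 0))

/-- `K` has finite fractal dimension with respect to the distance `d`. -/
def HasFiniteFdim {X : Type*} (d : X → X → ℝ) (K : Set X) : Prop :=
  ∃ D : ℝ, ∀ᶠ ε in nhdsWithin (0 : ℝ) (Set.Ioi 0),
    Real.log (covN d K ε) / Real.log (1 / ε) ≤ D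

/-- The abstract functional setting for the Navier–Stokes–Voigt equations:
`H` is a real Hilbert space, `A` a strictly positive self-adjoint operator with
square root `sqrtA`, first eigenvalue `lam1`; `V = D(A^{1/2})` (as a subset of `H`),
`DA = D(A)`; `Bop` is the bilinear term with trilinear form `b(u,v,w) = ⟪Bop u v, w⟫`;
`nu` the viscosity, `g` the force; `Sα α t` is the solution semigroup of the
Navier–Stokes–Voigt problem `u' + α²Au' + νAu + B(u,u) = g`. -/
structure NSVSetting (H : Type*) [NormedAddCommGroup H] [InnerProductSpace ℝ H]
    [CompleteSpace H] where
  A : H →ₗ[ℝ] H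
  sqrtA : H →ₗ[ℝ] H
  V : Set H
  DA : Set H
  Bop : H →ₗ[ℝ] H →ₗ[ℝ] H
  lam1 : ℝ
  nu : ℝ
  g : H
  cb : ℝ
  Sα : ℝ → ℝ → H → H
  lam1_pos : 0 < lam1
  nu_pos : 0 < nu
  cb_pos : 0 < cb
  zero_mem_V : (0 : H) ∈ V
  DA_subset_V : DA ⊆ V
  sqrtA_sq : ∀ u ∈ DA, sqrtA (sqrtA u) = A u
  sqrtA_symm : ∀ u v : H, ⟪sqrtA u, v⟫ = ⟪u, sqrtA v⟫
  A_symm : ∀ u v : H, ⟪A u, v⟫ = ⟪u, A v⟫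
  A_pos : ∀ u ∈ DA, lam1 * ‖u‖ ^ 2 ≤ ⟪A u, u⟫
  poincare1 : ∀ u ∈ V, ‖u‖ ≤ (Real.sqrt lam1)⁻¹ * ‖sqrtA u‖
  poincare2 : ∀ u ∈ DA, ‖sqrtA u‖ ≤ (Real.sqrt lam1)⁻¹ * ‖A u‖
  b_skew : ∀ u ∈ V, ∀ v ∈ V, ⟪Bop u v, v⟫ = 0
  b_est1 : ∀ u ∈ V, ∀ v ∈ V, ∀ w ∈ V, |⟪Bop u v, w⟫| ≤
    cb * ‖sqrtA u‖ * ‖sqrtA v‖ * Real.sqrt ‖sqrtA w‖ * Real.sqrt ‖w‖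
  b_est2 : ∀ u ∈ V, ∀ v ∈ DA, ∀ w ∈ V, |⟪Bop u v, w⟫| ≤
    cb * ‖sqrtA u‖ * Real.sqrt ‖sqrtA v‖ * Real.sqrt ‖A v‖ * ‖w‖
  b_est3 : ∀ u ∈ DA, ∀ v ∈ V, ∀ w : H, |⟪Bop u v, w⟫| ≤
    cb * Real.sqrt ‖sqrtA u‖ * Real.sqrt ‖A u‖ * ‖sqrtA v‖ * ‖w‖
  Sα_zero : ∀ α ∈ Set.Ioc (0:ℝ) 1, ∀ u₀ ∈ V, Sα α 0 u₀ = u₀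
  Sα_mem : ∀ α ∈ Set.Ioc (0:ℝ) 1, ∀ u₀ ∈ V, ∀ t : ℝ, 0 ≤ t → Sα α t u₀ ∈ V
  Sα_semigroup : ∀ α ∈ Set.Ioc (0:ℝ) 1, ∀ u₀ ∈ V, ∀ s : ℝ, 0 ≤ s → ∀ t : ℝ, 0 ≤ t →
    Sα α (t + s) u₀ = Sα α t (Sα α s u₀)
  Sα_cont : ∀ α ∈ Set.Ioc (0:ℝ) 1, ∀ u₀ ∈ V,
    Continuous (fun t : ℝ => Sα α t u₀) ∧ Continuous (fun t : ℝ => sqrtA (Sα α t u₀))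
  Sα_sol : ∀ α ∈ Set.Ioc (0:ℝ) 1, ∀ u₀ ∈ V, ∃ u' : ℝ → H,
    (∀ t : ℝ, 0 ≤ t → HasDerivWithinAt (fun s => Sα α s u₀) (u' t) (Set.Ici 0) t) ∧
    (∀ t : ℝ, 0 ≤ t →
      u' t + α ^ 2 • A (u' t) + nu • A (Sα α t u₀) + Bop (Sα α t u₀) (Sα α t u₀) = g)
  Sα_unique : ∀ α ∈ Set.Ioc (0:ℝ) 1, ∀ u₀ ∈ V, ∀ u : ℝ → H,
    u 0 = u₀ → (∀ t : ℝ, 0 ≤ t → u t ∈ V) →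
    (∃ u' : ℝ → H, (∀ t : ℝ, 0 ≤ t → HasDerivWithinAt u (u' t) (Set.Ici 0) t) ∧
      (∀ t : ℝ, 0 ≤ t →
        u' t + α ^ 2 • A (u' t) + nu • A (u t) + Bop (u t) (u t) = g)) →
    ∀ t : ℝ, 0 ≤ t → u t = Sα α t u₀

namespace NSVSetting

variable {H : Type*} [NormedAddCommGroup H] [InnerProductSpace ℝ H] [CompleteSpace H]
variable (S : NSVSetting H)

/-- The `V`-norm `‖u‖ = |A^{1/2}u|`. -/
def nV (u : H) : ℝ := ‖S.sqrtA u‖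

/-- The `V_α`-norm, `‖u‖²_{V_α} = |u|² + α²‖u‖²`. -/
def nVα (α : ℝ) (u : H) : ℝ := Real.sqrt (‖u‖ ^ 2 + α ^ 2 * (S.nV u) ^ 2)

/-- The `V²_α`-norm, `‖u‖²_{V²_α} = ‖u‖² + α²|Au|²`. -/
def nV2α (α : ℝ) (u : H) : ℝ := Real.sqrt ((S.nV u) ^ 2 + α ^ 2 * ‖S.A u‖ ^ 2)

/-- The distance associated with the `V_α`-norm. -/
def dVα (α : ℝ) (u v : H) : ℝ := S.nVα α (u - v)

/-- `κ_ν = νλ₁/(1+λ₁α²)`. -/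
def kappa (α : ℝ) : ℝ := S.nu * S.lam1 / (1 + S.lam1 * α ^ 2)

/-- The absorbing set `B_α = {w ∈ V : |w|² + α²‖w‖² ≤ 2(1+λ₁α²)|g|²/(ν²λ₁²)}`. -/
def Babs (α : ℝ) : Set H :=
  {w | w ∈ S.V ∧ ‖w‖ ^ 2 + α ^ 2 * (S.nV w) ^ 2 ≤
    2 * (1 + S.lam1 * α ^ 2) * ‖S.g‖ ^ 2 / (S.nu ^ 2 * S.lam1 ^ 2)}

/-- `M₁ = [3(1+λ₁α²)|g|²/(ν²λ₁²)]^{1/2}`. -/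
def M1 (α : ℝ) : ℝ :=
  Real.sqrt (3 * (1 + S.lam1 * α ^ 2) * ‖S.g‖ ^ 2 / (S.nu ^ 2 * S.lam1 ^ 2))

/-- `r_α = (c/κ_ν)[M₁⁶/(α⁶ν³) + 2|g|²/ν]`. -/
def rα (c α : ℝ) : ℝ :=
  c / S.kappa α * ((S.M1 α) ^ 6 / (α ^ 6 * S.nu ^ 3) + 2 * ‖S.g‖ ^ 2 / S.nu)

/-- `D_α(r) = {u ∈ D(A) : ‖u‖² + α²|Au|² ≤ r} ∩ B_α`. -/
def Dset (α r : ℝ) : Set H :=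
  {u | u ∈ S.DA ∧ (S.nV u) ^ 2 + α ^ 2 * ‖S.A u‖ ^ 2 ≤ r} ∩ S.Babs α

/-- A set is sequentially compact for the `V_α`-metric. -/
def IsVαCompact (α : ℝ) (K : Set H) : Prop :=
  ∀ x : ℕ → H, (∀ n, x n ∈ K) → ∃ y ∈ K, ∃ φ : ℕ → ℕ, StrictMono φ ∧
    Tendsto (fun n => S.dVα α (x (φ n)) y) atTop (nhds 0)

/-- `Aset` is the global attractor of `S_α(t)` on `V_α`: a compact (in `V_α`)
fully invariant set attracting all `V_α`-bounded subsets of `V_α`. -/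
def IsGlobalAttractor (α : ℝ) (Aset : Set H) : Prop :=
  Aset ⊆ S.V ∧ Aset.Nonempty ∧ S.IsVαCompact α Aset ∧
  (∀ t : ℝ, 0 ≤ t → S.Sα α t '' Aset = Aset) ∧
  (∀ Bnd : Set H, Bnd ⊆ S.V → (∃ R, ∀ u ∈ Bnd, S.nVα α u ≤ R) →
    Tendsto (fun t => hausSemidist (S.dVα α) (S.Sα α t '' Bnd) Aset) atTop (nhds 0))

/-- The set `K_α`: the closure in `V_α` of `⋃_{t ≥ t_e} S_α(t)D_α(r_α)`
(where the constant `c` enters through `r_α`). -/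
def Kset (c α te : ℝ) : Set H :=
  {y | y ∈ S.V ∧ ∀ ε : ℝ, 0 < ε →
    ∃ x ∈ ⋃ t ∈ Set.Ici te, S.Sα α t '' S.Dset α (S.rα c α), S.dVα α y x < ε}

/-- The dual norm `‖f‖_* = sup {⟪f,v⟫ : v ∈ V, ‖v‖ ≤ 1}`. -/
def dualN (f : H) : ℝ := sSup {r : ℝ | ∃ v ∈ S.V, S.nV v ≤ 1 ∧ r = ⟪f, v⟫}

end NSVSetting

/-!
Write `v = G⁻¹w`. Since `G⁻¹` is self-adjoint and `b(u, v, v) = 0`,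
`⟪L w, w⟫ = -(ν/α²)|w|² + (ν/α²)|v|² - b(v, u, v)`, while `|w|² = |v|² + α²‖v‖²` because `G` is
an isometry from `V_α` onto `H`. The estimate `|b(v, u, v)| ≤ c_b ‖v‖^{3/2} ‖u‖ |v|^{1/2}` and
Young's inequality with exponents `4/3` and `4` give
`-b(v, u, v) ≤ (ν/2)‖v‖² + c_b⁴ ‖u‖⁴ |v|² / ν³`, and `α²‖u‖² ≤ M₁²` turns `‖u‖⁴` into
`M₁² ‖u‖² / α²`. Hence the theorem holds with `c = c_b⁴`.
-/

lemma two_mul_pow_three_mul_le (p z : ℝ) : 2 * p ^ 3 * z ≤ p ^ 4 + 2 * z ^ 4 := by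
  linarith [sq_nonneg (p ^ 2 - p * z - z ^ 2), sq_nonneg (p * z - z ^ 2)]

lemma mul_mul_sqrt_mul_sqrt_le {ν : ℝ} (hν : 0 < ν) (k : ℝ) {a b : ℝ} (ha : 0 ≤ a)
    (hb : 0 ≤ b) : k * a * √a * √b ≤ ν / 2 * a ^ 2 + k ^ 4 * b ^ 2 / ν ^ 3 := by
  have young := two_mul_pow_three_mul_le (ν * √a) (k * √b)
  have sqrt_a_pow_three : √a ^ 3 = a * √a := by rw [pow_succ, Real.sq_sqrt ha]
  have sqrt_pow_four {x : ℝ} (hx : 0 ≤ x) : √x ^ 4 = x ^ 2 := by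
    rw [show 4 = 2 * 2 by rfl, pow_mul, Real.sq_sqrt hx]
  rw [mul_pow, mul_pow, mul_pow, sqrt_a_pow_three, sqrt_pow_four ha, sqrt_pow_four hb] at young
  rw [← sub_nonneg]
  have expand : ν / 2 * a ^ 2 + k ^ 4 * b ^ 2 / ν ^ 3 - k * a * √a * √b =
      (ν ^ 4 * a ^ 2 + 2 * (k ^ 4 * b ^ 2) - 2 * (ν ^ 3 * (a * √a)) * (k * √b)) /
        (2 * ν ^ 3) := by
    field_simp
  rw [expand]
  exact div_nonneg (by linarith) (by positivity)

lemma LinearMap.IsSymmetric.rightInverse {E : Type*} [NormedAddCommGroup E]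
    [InnerProductSpace ℝ E] {G Ginv : E →ₗ[ℝ] E} (hG : G.IsSymmetric)
    (h : Function.RightInverse Ginv G) : Ginv.IsSymmetric := fun v w => by
  calc ⟪Ginv v, w⟫ = ⟪Ginv v, G (Ginv w)⟫ := by rw [h]
    _ = ⟪G (Ginv v), Ginv w⟫ := (hG _ _).symm
    _ = ⟪v, Ginv w⟫ := by rw [h]

namespace NSVSetting

variable {H : Type*} [NormedAddCommGroup H] [InnerProductSpace ℝ H] [CompleteSpace H]
variable (S : NSVSetting H)

lemma nVα_sq {α : ℝ} (u : H) : S.nVα α u ^ 2 = ‖u‖ ^ 2 + α ^ 2 * S.nV u ^ 2 :=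
  Real.sq_sqrt (by positivity)

lemma sq_mul_nV_sq_le_of_nVα_le {α M : ℝ} {u : H} (h : S.nVα α u ≤ M) :
    α ^ 2 * S.nV u ^ 2 ≤ M ^ 2 := by
  have := pow_le_pow_left₀ (Real.sqrt_nonneg _) h 2
  rw [← nVα, nVα_sq] at this
  nlinarith [sq_nonneg ‖u‖]

lemma neg_inner_Bop_self_le {ν : ℝ} (hν : 0 < ν) {u v : H} (hu : u ∈ S.V) (hv : v ∈ S.V) :
    -⟪S.Bop v u, v⟫ ≤ ν / 2 * S.nV v ^ 2 + S.cb ^ 4 * S.nV u ^ 4 * ‖v‖ ^ 2 / ν ^ 3 := by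
  have hb := neg_le_of_abs_le (S.b_est1 v hv u hu v hv)
  have young := mul_mul_sqrt_mul_sqrt_le hν (S.cb * S.nV u) (norm_nonneg (S.sqrtA v))
    (norm_nonneg v)
  rw [mul_pow] at young
  unfold nV at *
  linarith

lemma neg_inner_Bop_self_le_of_nVα_le {α ν M : ℝ} (hα : 0 < α) (hν : 0 < ν) {u v : H}
    (hu : u ∈ S.V) (hv : v ∈ S.V) (huM : S.nVα α u ≤ M) :
    -⟪S.Bop v u, v⟫ ≤
      ν / 2 * S.nV v ^ 2 + S.cb ^ 4 * M ^ 2 / ν ^ 3 * S.nV u ^ 2 * ‖v‖ ^ 2 / α ^ 2 := by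
  have hm : S.nV u ^ 4 ≤ M ^ 2 * S.nV u ^ 2 / α ^ 2 := by
    rw [le_div_iff₀ (by positivity)]
    nlinarith [S.sq_mul_nV_sq_le_of_nVα_le huM, sq_nonneg (S.nV u)]
  calc -⟪S.Bop v u, v⟫ ≤ ν / 2 * S.nV v ^ 2 + S.cb ^ 4 * S.nV u ^ 4 * ‖v‖ ^ 2 / ν ^ 3 :=
        S.neg_inner_Bop_self_le hν hu hv
    _ ≤ ν / 2 * S.nV v ^ 2 + S.cb ^ 4 * (M ^ 2 * S.nV u ^ 2 / α ^ 2) * ‖v‖ ^ 2 / ν ^ 3 := by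
        gcongr
    _ = _ := by ring

lemma inner_linearized_self {α ν : ℝ} {G Ginv : H →ₗ[ℝ] H} (hG : G.IsSymmetric)
    (hGGinv : ∀ w, G (Ginv w) = w) {u : H} (hu : u ∈ S.V) (hGinv : ∀ w, Ginv w ∈ S.V)
    (w : H) :
    ⟪-((ν / α ^ 2) • w) + (ν / α ^ 2) • Ginv (Ginv w)
        - Ginv (S.Bop (Ginv w) u) - Ginv (S.Bop u (Ginv w)), w⟫ =
      -(ν / α ^ 2) * ‖w‖ ^ 2 + ν / α ^ 2 * ‖Ginv w‖ ^ 2 - ⟪S.Bop (Ginv w) u, Ginv w⟫ := by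
  have hGinv_symm := hG.rightInverse hGGinv
  have skew : ⟪Ginv (S.Bop u (Ginv w)), w⟫ = 0 := by
    rw [hGinv_symm]
    exact S.b_skew u hu _ (hGinv w)
  rw [inner_sub_left, inner_sub_left, inner_add_left, inner_neg_left, real_inner_smul_left,
    real_inner_smul_left, hGinv_symm (Ginv w), hGinv_symm (S.Bop _ _), skew,
    real_inner_self_eq_norm_sq, real_inner_self_eq_norm_sq]
  ring

end NSVSetting

/-- the linearized operator `L(û;t)` along a trajectory on the
attractor satisfies `⟪L(û;t)w, w⟫ ≤ −h₀|w|² + h₁(t)|G⁻¹w|²` with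
`h₀ = ν/(2α²)` and `h₁(t) = (1/α²)(ν + c(M₁²/ν³)‖u(t)‖²)`. -/
theorem statement15 {H : Type*} [NormedAddCommGroup H] [InnerProductSpace ℝ H]
    [CompleteSpace H] (S : NSVSetting H) :
    ∃ c : ℝ, 0 < c ∧ ∀ α ∈ Set.Ioc (0:ℝ) 1, ∀ u : ℝ → H,
      (∀ t : ℝ, 0 ≤ t → u t ∈ S.V) →
      (∃ u' : ℝ → H, (∀ t : ℝ, 0 ≤ t → HasDerivWithinAt u (u' t) (Set.Ici 0) t) ∧
        (∀ t : ℝ, 0 ≤ t →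
          u' t + α ^ 2 • S.A (u' t) + S.nu • S.A (u t) + S.Bop (u t) (u t) = S.g)) →
      (∀ t : ℝ, 0 ≤ t → S.nVα α (u t) ≤ S.M1 α) →
      ∀ G Ginv : H →ₗ[ℝ] H,
        (∀ w, Ginv (G w) = w) → (∀ w, G (Ginv w) = w) →
        (∀ w, G (G w) = w + α ^ 2 • S.A w) →
        (∀ v w : H, ⟪G v, w⟫ = ⟪v, G w⟫) →
        (∀ w ∈ S.V, ‖G w‖ = S.nVα α w) →
        (∀ w : H, Ginv w ∈ S.V) →
        ∀ (w : H) (t : ℝ), 0 ≤ t →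
          ⟪-((S.nu / α ^ 2) • w) + (S.nu / α ^ 2) • Ginv (Ginv w)
              - Ginv (S.Bop (Ginv w) (u t)) - Ginv (S.Bop (u t) (Ginv w)), w⟫ ≤
            -(S.nu / (2 * α ^ 2)) * ‖w‖ ^ 2
              + (1 / α ^ 2) * (S.nu + c * (S.M1 α) ^ 2 / S.nu ^ 3 * (S.nV (u t)) ^ 2)
                * ‖Ginv w‖ ^ 2 := by
  refine ⟨S.cb ^ 4, pow_pos S.cb_pos 4, ?_⟩
  rintro α ⟨hα, -⟩ u hu - hbound G Ginv - hGGinv - hG hGnorm hGinv w t ht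
  have hw : ‖w‖ ^ 2 = ‖Ginv w‖ ^ 2 + α ^ 2 * S.nV (Ginv w) ^ 2 := by
    rw [← S.nVα_sq, ← hGnorm _ (hGinv w), hGGinv]
  have hB := S.neg_inner_Bop_self_le_of_nVα_le hα S.nu_pos (hu t ht) (hGinv w) (hbound t ht)
  set v := Ginv w
  calc _ = -(S.nu / α ^ 2) * ‖w‖ ^ 2 + S.nu / α ^ 2 * ‖v‖ ^ 2 - ⟪S.Bop v (u t), v⟫ :=
        S.inner_linearized_self hG hGGinv (hu t ht) hGinv w
    _ ≤ -(S.nu / α ^ 2) * ‖w‖ ^ 2 + S.nu / α ^ 2 * ‖v‖ ^ 2 + (S.nu / 2 * S.nV v ^ 2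
          + S.cb ^ 4 * S.M1 α ^ 2 / S.nu ^ 3 * S.nV (u t) ^ 2 * ‖v‖ ^ 2 / α ^ 2) := by
        linarith
    _ = -(S.nu / (2 * α ^ 2)) * ‖w‖ ^ 2
          + 1 / α ^ 2 * (S.nu + S.cb ^ 4 * S.M1 α ^ 2 / S.nu ^ 3 * S.nV (u t) ^ 2) * ‖v‖ ^ 2
          - S.nu / (2 * α ^ 2) * ‖v‖ ^ 2 := by
        rw [hw]
        field_simp
        ring
    _ ≤ _ := sub_le_self _ (by have := S.nu_pos; positivity)
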